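/- arXiv:1902.09354 — 7 statements merged into one kernel-verified Lean document; each statement's English description precedes it below -/
import Mathlib

section
/- (Brauer) Let A be an n×n complex matrix with eigenvalues λ₁,…,λₙ (with multiplicity), and suppose Av = λₖ v for some eigenvector v and index k. Then for any q ∈ ℂⁿ, the matrix A + v qᵀ has eigenvalues λ₁,…,λ_{k−1}, λₖ + qᵀv, λ_{k+1},…,λₙ. -/
/-!
If `x` is not an eigenvalue of `M`, the matrix determinant lemma gives
`det (x - M - v qᵀ) = det (x - M) * (1 - qᵀ (x - M)⁻¹ v)`, and `(x - M)⁻¹ v = v / (x - λₖ)`.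
Clearing the denominator yields `(x - λₖ) χ_{M + v qᵀ}(x) = χ_M(x) (x - λₖ - qᵀ v)` at all but
finitely many `x`, hence as polynomials; cancelling `X - λₖ` gives the factorization.
-/

open Matrix Polynomial

theorem Matrix.mul_det_add_vecMulVec_of_mulVec_eq_smul {n R : Type*} [Fintype n] [DecidableEq n]
    [CommRing R] {A : Matrix n n R} (hA : IsUnit A.det) {u : n → R} {c : R}
    (hu : A *ᵥ u = c • u) (w : n → R) :
    c * (A + vecMulVec u w).det = A.det * (c + w ⬝ᵥ u) := by
  have hinv : w ⬝ᵥ u = c * (w ⬝ᵥ (A⁻¹ *ᵥ u)) := by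
    rw [← smul_eq_mul, ← dotProduct_smul, ← mulVec_smul, ← hu, mulVec_mulVec,
      nonsing_inv_mul _ hA, one_mulVec]
  rw [vecMulVec_eq Unit, det_add_replicateCol_mul_replicateRow hA, det_unique (n := Unit),
    Matrix.mul_assoc, ← replicateCol_mulVec, add_apply, one_apply_eq,
    replicateRow_mul_replicateCol_apply, hinv]
  ring

theorem Matrix.mul_charpoly_add_vecMulVec_of_mulVec_eq_smul {n K : Type*} [Fintype n]
    [DecidableEq n] [Field K] [Infinite K] {M : Matrix n n K} {v : n → K} {μ : K}
    (hv : M *ᵥ v = μ • v) (q : n → K) :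
    (X - C μ) * (M + vecMulVec v q).charpoly = M.charpoly * (X - C (μ + q ⬝ᵥ v)) := by
  classical
  refine eq_of_infinite_eval_eq _ _ <|
    M.charpoly.roots.toFinset.finite_toSet.infinite_compl.mono fun x hx => ?_
  have hunit : IsUnit (scalar n x - M).det := by
    rw [← eval_charpoly, isUnit_iff_ne_zero]
    simpa [M.charpoly_monic.ne_zero] using hx
  have hxv : (scalar n x - M) *ᵥ v = (x - μ) • v := by
    simp [sub_mulVec, hv, sub_smul]
  have key := mul_det_add_vecMulVec_of_mulVec_eq_smul hunit hxv (-q)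
  simp only [Set.mem_ofPred_eq, eval_mul, eval_sub, eval_X, eval_C, eval_charpoly]
  convert key using 2
  · rw [vecMulVec_neg, ← sub_eq_add_neg, sub_sub]
  · rw [neg_dotProduct]
    ring

theorem brauer_general (n : ℕ) (M : Matrix (Fin n) (Fin n) ℂ) (lam : Fin n → ℂ) (k : Fin n)
    (hchar : M.charpoly = ∏ i, (X - C (lam i)))
    (v : Fin n → ℂ) (he : M.mulVec v = lam k • v) (q : Fin n → ℂ) :
    (M + Matrix.vecMulVec v q).charpoly =
      (∏ i ∈ Finset.univ.erase k, (X - C (lam i))) *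
        (X - C (lam k + dotProduct q v)) := by
  have key := mul_charpoly_add_vecMulVec_of_mulVec_eq_smul he q
  rw [hchar, ← Finset.mul_prod_erase _ _ (Finset.mem_univ k), mul_assoc] at key
  exact mul_left_cancel₀ (X_sub_C_ne_zero (lam k)) key

theorem brauer (n : ℕ) (M : Matrix (Fin n) (Fin n) ℂ) (lam : Fin n → ℂ) (k : Fin n)
    (hchar : M.charpoly = ∏ i, (X - C (lam i)))
    (v : Fin n → ℂ) (hv : v ≠ 0) (he : M.mulVec v = lam k • v) (q : Fin n → ℂ) :
    (M + Matrix.vecMulVec v q).charpoly =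
      (∏ i ∈ Finset.univ.erase k, (X - C (lam i))) *
        (X - C (lam k + dotProduct q v)) :=
  brauer_general n M lam k hchar v he q
end

section
/- (Rado) Let M be an n×n matrix with eigenvalues λ₁,…,λₙ, let X = [x₁ | ⋯ | x_r] with rank(X) = r < n and M xᵢ = λᵢ xᵢ for i = 1,…,r, and let 𝒞 be an arbitrary r×n matrix. Then the eigenvalues of M + X𝒞 are μ₁,…,μ_r, λ_{r+1},…,λₙ, where μ₁,…,μ_r are the eigenvalues of Ω + 𝒞X with Ω = diag(λ₁,…,λ_r). -/
open Matrix Polynomial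

/-!
The eigenvector equations say `M X = X Ω`, hence `(t - M) X = X (t - Ω)`, so
`(t - M)⁻¹ X = X (t - Ω)⁻¹` over the rational functions in `t`. With the matrix determinant lemma
and Sylvester's identity `det (1 - A B) = det (1 - B A)` this gives
`det (t - M - X 𝒞) = det (t - M) · det (1 - 𝒞 X (t - Ω)⁻¹)`
`                  = det (t - M) · det (t - Ω - 𝒞 X) / det (t - Ω)`,
and `det (t - Ω) = ∏_{i < r} (t - λᵢ)` cancels against `det (t - M) = ∏ᵢ (t - λᵢ)`.
-/

theorem Fin.prod_univ_eq_prod_castLE_mul_prod_filter {M : Type*} [CommMonoid M] {r n : ℕ}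
    (h : r ≤ n) (f : Fin n → M) :
    ∏ i, f i = (∏ i : Fin r, f (Fin.castLE h i)) *
      ∏ i ∈ Finset.univ.filter (fun i : Fin n => r ≤ (i : ℕ)), f i := by
  rw [← Finset.prod_filter_not_mul_prod_filter Finset.univ (fun i : Fin n => r ≤ (i : ℕ))]
  congr 1
  refine Finset.prod_bij' (fun i hi => ⟨i, by simpa using hi⟩) (fun i _ => Fin.castLE h i)
    ?_ ?_ ?_ ?_ ?_ <;> simp

namespace Matrix

variable {m n R : Type*} [Fintype m] [Fintype n] [DecidableEq m]

theorem mul_eq_mul_diagonal_of_mulVec_col [CommSemiring R] {M : Matrix n n R}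
    {P : Matrix n m R} {d : m → R} (h : ∀ i, M *ᵥ (fun j => P j i) = d i • fun j => P j i) :
    M * P = P * diagonal d := by
  ext j i
  rw [mul_diagonal]
  simpa [mul_apply, mulVec, dotProduct, mul_comm] using congrFun (h i) j

variable [DecidableEq n]

theorem inv_mul_eq_mul_inv_of_mul_eq_mul [CommRing R] {A : Matrix n n R} {B : Matrix m m R}
    {U : Matrix n m R} (hA : IsUnit A.det) (hB : IsUnit B.det) (h : A * U = U * B) :
    A⁻¹ * U = U * B⁻¹ := by
  calc A⁻¹ * U = A⁻¹ * (U * B) * B⁻¹ := by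
        rw [Matrix.mul_assoc, Matrix.mul_assoc, mul_nonsing_inv B hB, Matrix.mul_one]
    _ = U * B⁻¹ := by rw [← h, ← Matrix.mul_assoc, nonsing_inv_mul A hA, Matrix.one_mul]

theorem det_sub_mul_mul_det_of_isUnit [CommRing R] {A : Matrix n n R} {B : Matrix m m R}
    {U : Matrix n m R} (V : Matrix m n R) (hA : IsUnit A.det) (hB : IsUnit B.det)
    (h : A * U = U * B) :
    (A - U * V).det * B.det = A.det * (B - V * U).det := by
  have hsub : (1 : Matrix m m R) + V * A⁻¹ * -U = 1 - V * U * B⁻¹ := by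
    rw [Matrix.mul_neg, ← sub_eq_add_neg, Matrix.mul_assoc,
      inv_mul_eq_mul_inv_of_mul_eq_mul hA hB h, ← Matrix.mul_assoc]
  have hfactor : (1 : Matrix m m R) - B⁻¹ * (V * U) = B⁻¹ * (B - V * U) := by
    rw [Matrix.mul_sub, nonsing_inv_mul B hB]
  rw [sub_eq_add_neg, ← Matrix.neg_mul, det_add_mul _ _ hA, hsub, det_one_sub_mul_comm,
    hfactor, det_mul, det_nonsing_inv, mul_right_comm, mul_assoc, ← mul_assoc B.det,
    Ring.mul_inverse_cancel _ hB, one_mul]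

theorem det_sub_mul_mul_det_of_mul_eq_mul [CommRing R] [IsDomain R] {A : Matrix n n R}
    {B : Matrix m m R} {U : Matrix n m R} (V : Matrix m n R) (hA : A.det ≠ 0) (hB : B.det ≠ 0)
    (h : A * U = U * B) :
    (A - U * V).det * B.det = A.det * (B - V * U).det := by
  let φ := algebraMap R (FractionRing R)
  have hφ : Function.Injective φ := IsFractionRing.injective R (FractionRing R)
  have hA' : IsUnit (A.map φ).det := by
    rw [← RingHom.mapMatrix_apply, ← RingHom.map_det]
    exact ((map_ne_zero_iff φ hφ).mpr hA).isUnit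
  have hB' : IsUnit (B.map φ).det := by
    rw [← RingHom.mapMatrix_apply, ← RingHom.map_det]
    exact ((map_ne_zero_iff φ hφ).mpr hB).isUnit
  apply hφ
  have := det_sub_mul_mul_det_of_isUnit (V.map φ) hA' hB'
    (by rw [← Matrix.map_mul, h, Matrix.map_mul])
  simpa only [map_mul, RingHom.map_det, RingHom.mapMatrix_apply, Matrix.map_sub _ (map_sub φ),
    Matrix.map_mul] using this

theorem charmatrix_add [CommRing R] (M N : Matrix n n R) :
    charmatrix (M + N) = charmatrix M - N.map C := by
  ext i j
  simp [charmatrix_apply, sub_sub]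

theorem charmatrix_mul_eq_mul_charmatrix [CommRing R] {M : Matrix n n R} {Ω : Matrix m m R}
    {P : Matrix n m R} (h : M * P = P * Ω) :
    charmatrix M * P.map C = P.map C * charmatrix Ω := by
  rw [charmatrix, charmatrix, Matrix.sub_mul, Matrix.mul_sub, RingHom.mapMatrix_apply,
    RingHom.mapMatrix_apply, ← Matrix.map_mul, ← Matrix.map_mul, h,
    scalar_apply, scalar_apply, ← smul_eq_diagonal_mul, ← smul_eq_mul_diagonal]

theorem charpoly_add_mul_mul_charpoly_of_mul_eq_mul [CommRing R] [IsDomain R]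
    {M : Matrix n n R} {Ω : Matrix m m R} {P : Matrix n m R} (Q : Matrix m n R)
    (h : M * P = P * Ω) :
    (M + P * Q).charpoly * Ω.charpoly = M.charpoly * (Ω + Q * P).charpoly := by
  have := det_sub_mul_mul_det_of_mul_eq_mul (Q.map C) M.charpoly_monic.ne_zero
    Ω.charpoly_monic.ne_zero (charmatrix_mul_eq_mul_charmatrix h)
  rwa [← Matrix.map_mul, ← Matrix.map_mul, ← charmatrix_add, ← charmatrix_add] at this

end Matrix

theorem rado_general (n r : ℕ) (hrn : r < n) (M : Matrix (Fin n) (Fin n) ℂ) (lam : Fin n → ℂ)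
    (hchar : M.charpoly = ∏ i, (X - C (lam i)))
    (Xm : Matrix (Fin n) (Fin r) ℂ)
    (hcol : ∀ i : Fin r,
      M.mulVec (fun j => Xm j i) = lam (Fin.castLE hrn.le i) • fun j => Xm j i)
    (𝒞 : Matrix (Fin r) (Fin n) ℂ) :
    (M + Xm * 𝒞).charpoly =
      (Matrix.diagonal (fun i : Fin r => lam (Fin.castLE hrn.le i)) + 𝒞 * Xm).charpoly *
        ∏ i ∈ Finset.univ.filter (fun i : Fin n => r ≤ (i : ℕ)), (X - C (lam i)) := by
  set Ω := diagonal fun i : Fin r => lam (Fin.castLE hrn.le i)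
  have hMX : M * Xm = Xm * Ω := mul_eq_mul_diagonal_of_mulVec_col hcol
  have key := charpoly_add_mul_mul_charpoly_of_mul_eq_mul 𝒞 hMX
  rw [hchar, Fin.prod_univ_eq_prod_castLE_mul_prod_filter hrn.le, ← charpoly_diagonal] at key
  exact mul_right_cancel₀ (charpoly_monic Ω).ne_zero (by linear_combination key)

theorem rado (n r : ℕ) (hrn : r < n) (M : Matrix (Fin n) (Fin n) ℂ) (lam : Fin n → ℂ)
    (hchar : M.charpoly = ∏ i, (X - C (lam i)))
    (Xm : Matrix (Fin n) (Fin r) ℂ) (hrank : Xm.rank = r)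
    (hcol : ∀ i : Fin r,
      M.mulVec (fun j => Xm j i) = lam (Fin.castLE hrn.le i) • fun j => Xm j i)
    (𝒞 : Matrix (Fin r) (Fin n) ℂ) :
    (M + Xm * 𝒞).charpoly =
      (Matrix.diagonal (fun i : Fin r => lam (Fin.castLE hrn.le i)) + 𝒞 * Xm).charpoly *
        ∏ i ∈ Finset.univ.filter (fun i : Fin n => r ≤ (i : ℕ)), (X - C (lam i)) :=
  rado_general n r hrn M lam hchar Xm hcol 𝒞
end

section
/- If Λ = {λ₁, λ₂, …, λₙ} is the spectrum of an n×n centrosymmetric nonnegative matrix with Perron eigenvalue λ₁, then for every ε > 0, the list {λ₁+ε, λ₂, …, λₙ} is also the spectrum of an n×n centrosymmetric nonnegative matrix. -/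
/-!
Let ρ = λ₁. For t > ρ the resolvent (t - M)⁻¹ = ∑ Mᵏ / tᵏ⁺¹ is entrywise nonnegative, the series
converging by Gelfand's formula. As t ↓ ρ we have det (t - M) → 0, so by the bound
|det R| ≤ n! (∑ᵢⱼ Rᵢⱼ)ⁿ for R ≥ 0 the entry sum of the resolvent blows up; the normalised vectors
(t - M)⁻¹ 𝟙 / ∑ᵢⱼ (t - M)⁻¹ᵢⱼ then accumulate in the standard simplex at an eigenvector v ≥ 0 of
M for ρ. Centrosymmetry makes u = v + Jv another such eigenvector, now with Ju = u, so
M + (ε / uᵀu) u uᵀ is centrosymmetric and nonnegative, and Brauer's theorem shows that its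
spectrum is that of M with ρ moved to ρ + ε.
-/

open Matrix Polynomial

/-- The n×n exchange (counteridentity) matrix. -/
def Jmat (n : ℕ) : Matrix (Fin n) (Fin n) ℝ :=
  Matrix.of fun i j => if (i : ℕ) + (j : ℕ) = n - 1 then 1 else 0

theorem Jmat_eq_toMatrix_revPerm (n : ℕ) :
    Jmat n = (Fin.revPerm : Equiv.Perm (Fin n)).toPEquiv.toMatrix := by
  ext i j
  simp only [Jmat, of_apply, PEquiv.toMatrix_apply, Equiv.toPEquiv_apply, Option.mem_def,
    Option.some.injEq, Fin.revPerm_apply, Fin.ext_iff, Fin.val_rev]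
  congr 1
  apply propext
  omega

theorem Jmat_mul_mul_Jmat {n : ℕ} (M : Matrix (Fin n) (Fin n) ℝ) :
    Jmat n * M * Jmat n = M.submatrix Fin.revPerm Fin.revPerm := by
  rw [Jmat_eq_toMatrix_revPerm, PEquiv.toMatrix_toPEquiv_mul, PEquiv.mul_toMatrix_toPEquiv,
    submatrix_submatrix, Fin.revPerm_symm]
  rfl

open Filter Topology

theorem tendsto_pow_nhds_zero_of_spectralRadius_lt_one {A : Type*} [NormedRing A]
    [NormedAlgebra ℂ A] [CompleteSpace A] {a : A} (h : spectralRadius ℂ a < 1) :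
    Tendsto (a ^ ·) atTop (𝓝 0) := by
  obtain ⟨r, hr, hr1⟩ := ENNReal.lt_iff_exists_nnreal_btwn.mp h
  have hgelfand := spectrum.pow_nnnorm_pow_one_div_tendsto_nhds_spectralRadius a
  have hev : ∀ᶠ k : ℕ in atTop, ‖a ^ k‖ ≤ (r : ℝ) ^ k := by
    filter_upwards [hgelfand.eventually_lt_const hr, eventually_ne_atTop 0] with k hk hk0
    have := ENNReal.rpow_le_rpow hk.le (Nat.cast_nonneg k)
    rw [← ENNReal.rpow_mul, one_div, inv_mul_cancel₀ (Nat.cast_ne_zero.mpr hk0), ENNReal.rpow_one,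
      ENNReal.rpow_natCast] at this
    exact_mod_cast this
  exact squeeze_zero_norm' hev (tendsto_pow_atTop_nhds_zero_of_lt_one r.2 (by exact_mod_cast hr1))

theorem tendsto_nhds_zero_of_tendsto_pow {a : ℕ → ℝ} (ha : ∀ k, 0 ≤ a k) {n : ℕ} (hn : n ≠ 0)
    (h : Tendsto (fun k => a k ^ n) atTop (𝓝 0)) : Tendsto a atTop (𝓝 0) := by
  have := h.rpow_const (p := (n : ℝ)⁻¹) (Or.inr (by positivity))
  rwa [Real.zero_rpow (by positivity), funext fun k => Real.pow_rpow_inv_natCast (ha k) hn] at this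

theorem Polynomial.prod_X_sub_C_update_mul {ι R : Type*} [Fintype ι] [DecidableEq ι] [CommRing R]
    (lam : ι → R) (i : ι) (b : R) :
    (∏ j, (X - C (Function.update lam i b j))) * (X - C (lam i)) =
      (∏ j, (X - C (lam j))) * (X - C b) := by
  simp only [← Finset.mul_prod_erase _ _ (Finset.mem_univ i), Function.update_self]
  rw [Finset.prod_congr rfl fun j hj => by rw [Function.update_of_ne (Finset.ne_of_mem_erase hj)]]
  ring

namespace Matrix

variable {ι : Type*} [Fintype ι]

theorem mulVec_comp_eq_smul_of_submatrix_eq {R : Type*} [CommSemiring R] {M : Matrix ι ι R}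
    {e : ι ≃ ι} (hM : M.submatrix e e = M) {v : ι → R} {μ : R} (hv : M *ᵥ v = μ • v) :
    M *ᵥ (v ∘ e) = μ • (v ∘ e) := by
  conv_lhs => rw [← hM]
  rw [submatrix_mulVec_equiv, Function.comp_assoc, e.self_comp_symm, Function.comp_id, hv]
  rfl

theorem exists_nonneg_eigenvector_comp_eq_of_submatrix_eq {M : Matrix ι ι ℝ} {e : ι ≃ ι}
    (he : Function.Involutive e) (hM : M.submatrix e e = M) {v : ι → ℝ}
    (hv : v ∈ stdSimplex ℝ ι) {ρ : ℝ} (hMv : M *ᵥ v = ρ • v) :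
    ∃ u : ι → ℝ, (∀ i, 0 ≤ u i) ∧ u ∘ e = u ∧ 0 < u ⬝ᵥ u ∧ M *ᵥ u = ρ • u := by
  refine ⟨v + v ∘ e, fun i => add_nonneg (hv.1 i) (hv.1 _), ?_, ?_, ?_⟩
  · ext i
    simp [he i, add_comm]
  · have hsum : ∑ i, (v + v ∘ e) i = 2 := by
      simp only [Pi.add_apply, Function.comp_apply, Finset.sum_add_distrib, Equiv.sum_comp e v,
        hv.2]
      norm_num
    simpa using dotProduct_self_star_pos_iff.2 fun h0 : v + v ∘ e = 0 => by
      rw [h0] at hsum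
      simp at hsum
  · rw [mulVec_add, hMv, mulVec_comp_eq_smul_of_submatrix_eq hM hMv, smul_add]

theorem exists_mem_stdSimplex_mulVec_eq_smul_of_tendsto {M : Matrix ι ι ℝ} {x : ℕ → ι → ℝ}
    (hx : ∀ k, x k ∈ stdSimplex ℝ ι) {t : ℕ → ℝ} {ρ : ℝ} (ht : Tendsto t atTop (𝓝 ρ))
    (h : Tendsto (fun k => t k • x k - M *ᵥ x k) atTop (𝓝 0)) :
    ∃ v ∈ stdSimplex ℝ ι, M *ᵥ v = ρ • v := by
  obtain ⟨v, hv, φ, hφ, hxφ⟩ := (isCompact_stdSimplex ℝ ι).tendsto_subseq hx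
  have hlim : Tendsto (fun k => t (φ k) • x (φ k) - M *ᵥ x (φ k)) atTop (𝓝 (ρ • v - M *ᵥ v)) :=
    ((ht.comp hφ.tendsto_atTop).smul hxφ).sub
      ((continuous_const.matrix_mulVec continuous_id).tendsto v |>.comp hxφ)
  exact ⟨v, hv, (sub_eq_zero.mp (tendsto_nhds_unique hlim (h.comp hφ.tendsto_atTop))).symm⟩

variable [DecidableEq ι]

theorem charpoly_add_vecMulVec_mul_X_sub_C {K : Type*} [Field K] [Infinite K] {A : Matrix ι ι K}
    {u : ι → K} {μ : K} (hu : A *ᵥ u = μ • u) (w : ι → K) :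
    (A + vecMulVec u w).charpoly * (X - C μ) = A.charpoly * (X - C (μ + w ⬝ᵥ u)) := by
  refine eq_of_infinite_eval_eq _ _ ((Set.finite_singleton μ).infinite_compl.mono fun z hz => ?_)
  have hz : z - μ ≠ 0 := sub_ne_zero.mpr hz
  set B := scalar ι z - A
  have hBu : B *ᵥ u = (z - μ) • u := by
    rw [sub_mulVec, hu, scalar_apply, ← smul_one_eq_diagonal, smul_mulVec, one_mulVec, sub_smul]
  have hfac : scalar ι z - (A + vecMulVec u w) = B * (1 + vecMulVec (-(z - μ)⁻¹ • u) w) := by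
    rw [Matrix.mul_add, Matrix.mul_one, mul_vecMulVec, mulVec_smul, hBu, smul_smul,
      neg_mul, inv_mul_cancel₀ hz, neg_smul, one_smul, neg_vecMulVec, ← sub_eq_add_neg,
      sub_add_eq_sub_sub]
  simp only [Set.mem_ofPred_eq, eval_mul, eval_sub, eval_X, eval_C, eval_charpoly]
  rw [hfac, det_mul, vecMulVec_eq Unit, det_one_add_replicateCol_mul_replicateRow, dotProduct_smul,
    smul_eq_mul]
  field_simp
  ring

theorem charpoly_map_ofReal (M : Matrix ι ι ℝ) :
    (M.map Complex.ofReal).charpoly = M.charpoly.map Complex.ofRealHom :=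
  charpoly_map M Complex.ofRealHom

theorem mem_spectrum_iff_exists_eq_of_charpoly_eq_prod {K : Type*} [Field K] {A : Matrix ι ι K}
    {lam : ι → K} (h : A.charpoly = ∏ i, (X - C (lam i))) {z : K} :
    z ∈ spectrum K A ↔ ∃ i, lam i = z := by
  rw [mem_spectrum_iff_isRoot_charpoly, IsRoot.def, h, eval_prod, Finset.prod_eq_zero_iff]
  simp [sub_eq_zero, eq_comm]

theorem tendsto_pow_nhds_zero_of_forall_norm_lt_one [Nonempty ι] {A : Matrix ι ι ℂ}
    (hA : ∀ z ∈ spectrum ℂ A, ‖z‖ < 1) : Tendsto (A ^ ·) atTop (𝓝 0) := by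
  -- Gelfand's formula needs a Banach algebra norm; any one induces the product topology.
  let := Matrix.linftyOpNormedRing (n := ι) (α := ℂ)
  let := Matrix.linftyOpNormedAlgebra (n := ι) (R := ℂ) (α := ℂ)
  refine tendsto_pow_nhds_zero_of_spectralRadius_lt_one ?_
  exact_mod_cast spectrum.spectralRadius_lt_of_forall_lt (r := 1) A fun z hz => by
    exact_mod_cast hA z hz

theorem tendsto_inv_smul_pow_nhds_zero [Nonempty ι] {M : Matrix ι ι ℝ} {t : ℝ} (ht : 0 < t)
    (hM : ∀ z ∈ spectrum ℂ (M.map Complex.ofReal), ‖z‖ < t) :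
    Tendsto ((t⁻¹ • M) ^ ·) atTop (𝓝 0) := by
  have ht' : (t : ℂ) ≠ 0 := by exact_mod_cast ht.ne'
  set A : Matrix ι ι ℂ := (t⁻¹ • M).map Complex.ofReal
  have hA : ∀ z ∈ spectrum ℂ A, ‖z‖ < 1 := fun z hz => by
    have hAM : Units.mk0 (t : ℂ) ht' • A = M.map Complex.ofReal := by
      ext i j
      simp [A, ht']
    have := hM _ (hAM ▸ spectrum.smul_mem_smul_iff.mpr hz)
    rw [Units.smul_mk0, norm_smul, Complex.norm_real, Real.norm_of_nonneg ht.le] at this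
    exact (mul_lt_iff_lt_one_right ht).mp this
  have hlim := (continuous_id.matrix_map Complex.continuous_re).tendsto 0 |>.comp
    (tendsto_pow_nhds_zero_of_forall_norm_lt_one hA)
  refine (hlim.congr fun k => ?_).trans (by simp)
  rw [Function.comp_apply, id, show A ^ k = ((t⁻¹ • M) ^ k).map Complex.ofReal from
    (Matrix.map_pow _ Complex.ofRealHom k).symm]
  ext i j
  simp

theorem isUnit_det_one_sub_of_tendsto_pow {K : Type*} [Field K] [TopologicalSpace K]
    [IsTopologicalRing K] [T2Space K] {M : Matrix ι ι K} (h : Tendsto (M ^ ·) atTop (𝓝 0)) :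
    IsUnit (1 - M).det := by
  have hdet : Tendsto (fun k => (1 - M ^ k).det) atTop (𝓝 1) := by
    simpa [Function.comp_def] using (continuous_id.matrix_det.tendsto _).comp
      ((tendsto_const_nhds (x := (1 : Matrix ι ι K))).sub h)
  obtain ⟨k, hk⟩ := (hdet.eventually_ne one_ne_zero).exists
  rw [← mul_neg_geom_sum, det_mul] at hk
  exact isUnit_iff_ne_zero.mpr (left_ne_zero_of_mul hk)

theorem inv_one_sub_apply_nonneg {M : Matrix ι ι ℝ} (hM : ∀ i j, 0 ≤ M i j)
    (h : Tendsto (M ^ ·) atTop (𝓝 0)) (i j : ι) : 0 ≤ (1 - M)⁻¹ i j := by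
  have hsum : ∀ N, ∑ k ∈ Finset.range N, M ^ k = (1 - M)⁻¹ * (1 - M ^ N) := fun N => by
    rw [← mul_neg_geom_sum, ← Matrix.mul_assoc,
      nonsing_inv_mul _ (isUnit_det_one_sub_of_tendsto_pow h), Matrix.one_mul]
  have hlim : Tendsto (fun N => ∑ k ∈ Finset.range N, M ^ k) atTop (𝓝 (1 - M)⁻¹) := by
    simpa [hsum] using
      ((tendsto_const_nhds (x := (1 : Matrix ι ι ℝ))).sub h).const_mul ((1 - M)⁻¹)
  refine ge_of_tendsto' (tendsto_pi_nhds.1 (tendsto_pi_nhds.1 hlim i) j) fun N => ?_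
  simpa [Matrix.sum_apply] using
    Finset.sum_nonneg fun k (_ : k ∈ Finset.range N) => pow_apply_nonneg hM k i j

theorem isUnit_det_smul_one_sub_and_inv_nonneg [Nonempty ι] {M : Matrix ι ι ℝ}
    (hM : ∀ i j, 0 ≤ M i j) {t : ℝ} (ht : 0 < t)
    (hspec : ∀ z ∈ spectrum ℂ (M.map Complex.ofReal), ‖z‖ < t) :
    IsUnit (t • 1 - M).det ∧ ∀ i j, 0 ≤ (t • 1 - M)⁻¹ i j := by
  have hpow := tendsto_inv_smul_pow_nhds_zero ht hspec
  have hunit := isUnit_det_one_sub_of_tendsto_pow hpow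
  have hfac : t • 1 - M = Units.mk0 t ht.ne' • (1 - t⁻¹ • M) := by
    rw [Units.smul_mk0, smul_sub, smul_smul, mul_inv_cancel₀ ht.ne', one_smul]
  refine ⟨?_, fun i j => ?_⟩
  · rw [hfac, Units.smul_def, det_smul]
    exact ((Units.mk0 t ht.ne').isUnit.pow _).mul hunit
  · rw [hfac, inv_smul' _ _ hunit]
    exact mul_nonneg (by simp [ht.le]) <|
      inv_one_sub_apply_nonneg (fun i j => mul_nonneg (inv_nonneg.2 ht.le) (hM i j)) hpow i j

theorem abs_det_le_factorial_mul_sum_pow {R : Matrix ι ι ℝ} (hR : ∀ i j, 0 ≤ R i j) :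
    |R.det| ≤ (Fintype.card ι).factorial * (∑ i, ∑ j, R i j) ^ Fintype.card ι := by
  have hle : ∀ i j, |R i j| ≤ ∑ i, ∑ j, R i j := fun i j => by
    rw [abs_of_nonneg (hR i j)]
    exact (Finset.single_le_sum (fun j _ => hR i j) (Finset.mem_univ j)).trans
      (Finset.single_le_sum (fun i _ => Finset.sum_nonneg fun j _ => hR i j) (Finset.mem_univ i))
  simpa using det_le (abv := AbsoluteValue.abs) hle

theorem sum_sum_pos_of_det_ne_zero [Nonempty ι] {R : Matrix ι ι ℝ} (hR : ∀ i j, 0 ≤ R i j)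
    (hdet : R.det ≠ 0) : 0 < ∑ i, ∑ j, R i j := by
  refine (Finset.sum_nonneg fun i _ => Finset.sum_nonneg fun j _ => hR i j).lt_of_ne' fun h0 => ?_
  have := abs_det_le_factorial_mul_sum_pow hR
  rw [h0, zero_pow Fintype.card_ne_zero, mul_zero] at this
  exact hdet (abs_nonpos_iff.mp this)

theorem tendsto_inv_sum_sum_nhds_zero [Nonempty ι] {R : ℕ → Matrix ι ι ℝ}
    (hR : ∀ k i j, 0 ≤ R k i j) {d : ℕ → ℝ} (hd : Tendsto d atTop (𝓝 0))
    (hRd : ∀ k, (R k).det * d k = 1) :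
    Tendsto (fun k => (∑ i, ∑ j, R k i j)⁻¹) atTop (𝓝 0) := by
  set n := Fintype.card ι
  have hpos : ∀ k, 0 < ∑ i, ∑ j, R k i j := fun k =>
    sum_sum_pos_of_det_ne_zero (hR k) (left_ne_zero_of_mul_eq_one (hRd k))
  have hle : ∀ k, ((∑ i, ∑ j, R k i j)⁻¹) ^ n ≤ n.factorial * |d k| := fun k => by
    rw [inv_pow, inv_le_iff_one_le_mul₀' (pow_pos (hpos k) n)]
    calc 1 = |(R k).det| * |d k| := by rw [← abs_mul, hRd k, abs_one]
      _ ≤ n.factorial * (∑ i, ∑ j, R k i j) ^ n * |d k| :=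
        mul_le_mul_of_nonneg_right (abs_det_le_factorial_mul_sum_pow (hR k)) (abs_nonneg _)
      _ = _ := by ring
  refine tendsto_nhds_zero_of_tendsto_pow (fun k => (inv_pos.2 (hpos k)).le)
    (Fintype.card_ne_zero (α := ι)) ?_
  refine squeeze_zero (fun k => pow_nonneg (inv_pos.2 (hpos k)).le n) hle ?_
  simpa using hd.abs.const_mul (n.factorial : ℝ)

theorem exists_mem_stdSimplex_mulVec_eq_smul [Nonempty ι] {M : Matrix ι ι ℝ}
    (hM : ∀ i j, 0 ≤ M i j) {ρ : ℝ} (hρ : (ρ : ℂ) ∈ spectrum ℂ (M.map Complex.ofReal))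
    (hspec : ∀ z ∈ spectrum ℂ (M.map Complex.ofReal), ‖z‖ ≤ ρ) :
    ∃ v ∈ stdSimplex ℝ ι, M *ᵥ v = ρ • v := by
  have hρ0 : 0 ≤ ρ := (abs_nonneg ρ).trans (by simpa using hspec ρ hρ)
  have hρdet : (ρ • 1 - M).det = 0 := by
    rw [mem_spectrum_iff_isRoot_charpoly, charpoly_map_ofReal] at hρ
    have := (isRoot_map_iff (f := Complex.ofRealHom) Complex.ofRealHom.injective).1 hρ
    rwa [IsRoot.def, eval_charpoly, scalar_apply, ← smul_one_eq_diagonal] at this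
  set t : ℕ → ℝ := fun k => ρ + 1 / (k + 1)
  have ht : Tendsto t atTop (𝓝 ρ) := by
    simpa [t] using tendsto_one_div_add_atTop_nhds_zero_nat.const_add ρ
  have hρt : ∀ k, ρ < t k := fun k => lt_add_of_pos_right ρ Nat.one_div_pos_of_nat
  choose hunit hR using fun k => isUnit_det_smul_one_sub_and_inv_nonneg hM
    (hρ0.trans_lt (hρt k)) fun z hz => (hspec z hz).trans_lt (hρt k)
  set R : ℕ → Matrix ι ι ℝ := fun k => (t k • 1 - M)⁻¹
  have hRdet : ∀ k, (R k).det * (t k • 1 - M).det = 1 := fun k => by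
    rw [← det_mul, nonsing_inv_mul _ (hunit k), det_one]
  have hdet : Tendsto (fun k => (t k • 1 - M).det) atTop (𝓝 0) := by
    simpa [Function.comp_def, hρdet] using
      (continuous_id.matrix_det.tendsto _).comp ((ht.smul_const 1).sub_const M)
  set σ : ℕ → ℝ := fun k => ∑ i, ∑ j, R k i j
  have hσ : ∀ k, 0 < σ k := fun k =>
    sum_sum_pos_of_det_ne_zero (hR k) (left_ne_zero_of_mul_eq_one (hRdet k))
  set x : ℕ → ι → ℝ := fun k => (σ k)⁻¹ • (R k *ᵥ fun _ => 1)
  have hx : ∀ k, t k • x k - M *ᵥ x k = (σ k)⁻¹ • fun _ => 1 := fun k => by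
    rw [show t k • x k - M *ᵥ x k = (t k • 1 - M) *ᵥ x k by
      rw [sub_mulVec, smul_mulVec, one_mulVec], mulVec_smul, mulVec_mulVec,
      mul_nonsing_inv _ (hunit k), one_mulVec]
  refine exists_mem_stdSimplex_mulVec_eq_smul_of_tendsto (x := x) (fun k => ⟨fun i => ?_, ?_⟩) ht ?_
  · exact mul_nonneg (inv_nonneg.2 (hσ k).le) (Finset.sum_nonneg fun j _ => by simpa using hR k i j)
  · simp only [x, Pi.smul_apply, smul_eq_mul, ← Finset.mul_sum, mulVec, dotProduct, mul_one]
    exact inv_mul_cancel₀ (hσ k).ne'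
  · simpa [hx] using (tendsto_inv_sum_sum_nhds_zero hR hdet hRdet).smul_const (fun _ : ι => (1 : ℝ))

end Matrix

theorem perron_perturbation_centrosymmetric (n : ℕ) (hn : 0 < n) (lam : Fin n → ℂ)
    (him : (lam ⟨0, hn⟩).im = 0)
    (hper : ∀ i, ‖lam i‖ ≤ (lam ⟨0, hn⟩).re)
    (M : Matrix (Fin n) (Fin n) ℝ)
    (hc : Jmat n * M * Jmat n = M) (hnn : ∀ i j, 0 ≤ M i j)
    (hchar : (M.map Complex.ofReal).charpoly = ∏ i, (X - C (lam i)))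
    (ε : ℝ) (hε : 0 < ε) :
    ∃ M' : Matrix (Fin n) (Fin n) ℝ,
      Jmat n * M' * Jmat n = M' ∧ (∀ i j, 0 ≤ M' i j) ∧
      (M'.map Complex.ofReal).charpoly =
        ∏ i, (X - C (Function.update lam ⟨0, hn⟩ (lam ⟨0, hn⟩ + (ε : ℂ)) i)) := by
  have : Nonempty (Fin n) := ⟨⟨0, hn⟩⟩
  set ρ := (lam ⟨0, hn⟩).re
  have hlam : lam ⟨0, hn⟩ = ρ := Complex.ext rfl (by simpa using him)
  have hmem z := mem_spectrum_iff_exists_eq_of_charpoly_eq_prod hchar (z := z)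
  obtain ⟨v, hv, hMv⟩ := exists_mem_stdSimplex_mulVec_eq_smul hnn ((hmem ρ).2 ⟨_, hlam⟩)
    fun z hz => by
      obtain ⟨i, rfl⟩ := (hmem z).1 hz
      exact hper i
  have hMJ : M.submatrix Fin.revPerm Fin.revPerm = M := Jmat_mul_mul_Jmat M ▸ hc
  obtain ⟨u, hu, hu_rev, huu, hMu⟩ :=
    exists_nonneg_eigenvector_comp_eq_of_submatrix_eq Fin.rev_involutive hMJ hv hMv
  set c := ε / (u ⬝ᵥ u)
  refine ⟨M + c • vecMulVec u u, ?_, fun i j => ?_, ?_⟩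
  · rw [Jmat_mul_mul_Jmat]
    change M.submatrix _ _ + c • vecMulVec (u ∘ Fin.revPerm) (u ∘ Fin.revPerm) = _
    rw [hMJ, hu_rev]
  · exact add_nonneg (hnn i j) <|
      mul_nonneg (div_nonneg hε.le huu.le) (mul_nonneg (hu i) (hu j))
  · have h := charpoly_add_vecMulVec_mul_X_sub_C hMu (c • u)
    rw [smul_dotProduct, smul_eq_mul, div_mul_cancel₀ _ huu.ne', vecMulVec_smul] at h
    apply mul_right_cancel₀ (X_sub_C_ne_zero (lam ⟨0, hn⟩))
    rw [prod_X_sub_C_update_mul, ← hchar, charpoly_map_ofReal, charpoly_map_ofReal, hlam]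
    simpa using congrArg (Polynomial.map Complex.ofRealHom) h
end

section
/- If a centrosymmetric nonnegative matrix C has Perron eigenvalue λ₁, then there exists a nonnegative eigenvector x of C for λ₁ satisfying Jx = x (a symmetric Perron eigenvector). -/
/-!
Perron–Frobenius through the resolvent. For `t > λ₁` Gelfand's formula makes the Neumann series
`∑ (M / t) ^ k` converge, so `(t - M)⁻¹` is entrywise nonnegative. The vector `y = |v|` satisfies
`M y ≥ λ₁ y`, so `x = (t - M)⁻¹ y` satisfies `0 ≤ (t - λ₁) x - y ≤ (t - λ₁) x`, and `x / ‖x‖` is a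
nonnegative unit vector with `‖M u - λ₁ u‖ ≤ t - λ₁`. Letting `t ↓ λ₁`, compactness of the
nonnegative part of the unit sphere yields a nonnegative eigenvector `x`. As `M` commutes with the
involution `J`, the vector `x + J x` is a nonnegative eigenvector fixed by `J`.
-/

open Matrix Polynomial

open Filter

lemma IsCompact.exists_nonpos_of_forall_exists_le {X : Type*} [TopologicalSpace X] {K : Set X}
    (hK : IsCompact K) {f : X → ℝ} (hf : ContinuousOn f K) (h : ∀ ε > 0, ∃ x ∈ K, f x ≤ ε) :
    ∃ x ∈ K, f x ≤ 0 := by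
  obtain ⟨x₁, hx₁, -⟩ := h 1 one_pos
  obtain ⟨x, hxK, hmin⟩ := hK.exists_isMinOn ⟨x₁, hx₁⟩ hf
  refine ⟨x, hxK, le_of_forall_pos_le_add fun ε hε => ?_⟩
  obtain ⟨y, hyK, hy⟩ := h ε hε
  simpa using (hmin hyK).trans hy

theorem spectrum.eventually_norm_pow_le_of_spectralRadius_lt {A : Type*} [NormedRing A]
    [NormedAlgebra ℂ A] [CompleteSpace A] {a : A} {s : ℝ}
    (h : spectralRadius ℂ a < ENNReal.ofReal s) :
    ∀ᶠ k in atTop, ‖a ^ k‖ ≤ s ^ k := by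
  filter_upwards [(pow_norm_pow_one_div_tendsto_nhds_spectralRadius a).eventually_lt_const h,
    eventually_ge_atTop 1] with k hk hk1
  have hs : 0 < s := ENNReal.ofReal_pos.mp (bot_le.trans_lt h)
  rw [ENNReal.ofReal_lt_ofReal_iff hs] at hk
  have := pow_le_pow_left₀ (by positivity) hk.le k
  rwa [← Real.rpow_natCast, ← Real.rpow_mul (norm_nonneg _), one_div_mul_cancel (by positivity : (k : ℝ) ≠ 0),
    Real.rpow_one] at this

lemma norm_le_norm_of_nonneg_of_le {ι : Type*} [Fintype ι] {x y : ι → ℝ} (hx : 0 ≤ x)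
    (hxy : x ≤ y) : ‖x‖ ≤ ‖y‖ :=
  (pi_norm_le_iff_of_nonneg (norm_nonneg y)).mpr fun i => by
    rw [Real.norm_of_nonneg (hx i)]
    exact (hxy i).trans ((le_abs_self _).trans (norm_le_pi_norm y i))

namespace Matrix

variable {ι α : Type*} [Fintype ι]

lemma mulVec_nonneg [Semiring α] [PartialOrder α] [IsOrderedRing α] {M : Matrix ι ι α}
    (hM : ∀ i j, 0 ≤ M i j) {x : ι → α} (hx : 0 ≤ x) : 0 ≤ M *ᵥ x :=
  fun i => Finset.sum_nonneg fun j _ => mul_nonneg (hM i j) (hx j)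

lemma abs_mulVec_le [Ring α] [LinearOrder α] [IsOrderedRing α] {M : Matrix ι ι α}
    (hM : ∀ i j, 0 ≤ M i j) (x : ι → α) : |M *ᵥ x| ≤ M *ᵥ |x| := fun i => by
  simpa [mulVec, dotProduct, abs_mul, abs_of_nonneg (hM i _)] using
    Finset.abs_sum_le_sum_abs (fun j => M i j * x j) Finset.univ

variable [DecidableEq ι]

lemma nonneg_of_nonneg_mulVec {A R : Matrix ι ι ℝ} (hR : ∀ i j, 0 ≤ R i j) (hAR : A * R = 1)
    {w : ι → ℝ} (hw : 0 ≤ A *ᵥ w) : 0 ≤ w := by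
  have hw' : w = R *ᵥ (A *ᵥ w) := by rw [mulVec_mulVec, mul_eq_one_comm.mp hAR, one_mulVec]
  exact hw' ▸ mulVec_nonneg hR hw

lemma exists_nonneg_mul_eq_one_of_summable {M : Matrix ι ι ℝ} (hM : ∀ i j, 0 ≤ M i j) {t : ℝ}
    (ht : 0 < t) (hsum : Summable fun k => (t⁻¹ • M) ^ k) :
    ∃ R : Matrix ι ι ℝ, (∀ i j, 0 ≤ R i j) ∧ (t • 1 - M) * R = 1 := by
  refine ⟨t⁻¹ • ∑' k, (t⁻¹ • M) ^ k, fun i j => ?_, ?_⟩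
  · have hN : ∀ i j, 0 ≤ (t⁻¹ • M) i j := fun i j => mul_nonneg (inv_nonneg.2 ht.le) (hM i j)
    have hij : HasSum (fun k => ((t⁻¹ • M) ^ k) i j) ((∑' k, (t⁻¹ • M) ^ k) i j) :=
      Pi.hasSum.mp (Pi.hasSum.mp hsum.hasSum i) j
    exact mul_nonneg (inv_nonneg.2 ht.le) (hij.nonneg fun k => pow_apply_nonneg hN k i j)
  · rw [mul_smul_comm, ← smul_mul_assoc, smul_sub, smul_smul, inv_mul_cancel₀ ht.ne', one_smul]
    exact hsum.one_sub_mul_tsum_pow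

lemma exists_approx_eigenvector_of_subinvariant {M : Matrix ι ι ℝ} {lam t : ℝ} (hlam : lam ≤ t)
    {y : ι → ℝ} (hy : 0 ≤ y) (hy0 : y ≠ 0) (hsub : lam • y ≤ M *ᵥ y) {R : Matrix ι ι ℝ}
    (hR : ∀ i j, 0 ≤ R i j) (hRinv : (t • 1 - M) * R = 1) :
    ∃ u ∈ Metric.sphere (0 : ι → ℝ) 1 ∩ Set.Ici 0, ‖M *ᵥ u - lam • u‖ ≤ t - lam := by
  set x := R *ᵥ y
  have hMx : M *ᵥ x = t • x - y := by
    have hx : (t • 1 - M) *ᵥ x = y := by rw [mulVec_mulVec, hRinv, one_mulVec]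
    rw [← hx, sub_mulVec, smul_mulVec, one_mulVec]
    abel
  have hw : 0 ≤ (t - lam) • x - y := by
    refine nonneg_of_nonneg_mulVec hR hRinv ?_
    have : (t • 1 - M) *ᵥ ((t - lam) • x - y) = M *ᵥ y - lam • y := by
      simp only [mulVec_sub, mulVec_smul, sub_mulVec, smul_mulVec, one_mulVec, hMx]
      module
    rw [this]
    exact sub_nonneg.mpr hsub
  have hx : 0 < ‖x‖ :=
    norm_pos_iff.mpr fun hx0 => hy0 (le_antisymm (by simpa [hx0] using hw) hy)
  refine ⟨‖x‖⁻¹ • x, ⟨?_, ?_⟩, ?_⟩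
  · simp [norm_smul, hx.ne']
  · exact smul_nonneg (inv_nonneg.2 hx.le) (mulVec_nonneg hR hy)
  · have : M *ᵥ (‖x‖⁻¹ • x) - lam • ‖x‖⁻¹ • x = ‖x‖⁻¹ • ((t - lam) • x - y) := by
      rw [mulVec_smul, hMx]; module
    rw [this, norm_smul, norm_inv, norm_norm, inv_mul_le_iff₀ hx]
    calc ‖(t - lam) • x - y‖ ≤ ‖(t - lam) • x‖ := norm_le_norm_of_nonneg_of_le hw (sub_le_self _ hy)
      _ = _ := by rw [norm_smul, Real.norm_of_nonneg (sub_nonneg.2 hlam), mul_comm]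

theorem exists_nonneg_eigenvector_of_subinvariant {M : Matrix ι ι ℝ} {lam : ℝ} {y : ι → ℝ}
    (hy : 0 ≤ y) (hy0 : y ≠ 0) (hsub : lam • y ≤ M *ᵥ y)
    (hres : ∀ t, lam < t → ∃ R : Matrix ι ι ℝ, (∀ i j, 0 ≤ R i j) ∧ (t • 1 - M) * R = 1) :
    ∃ x, x ≠ 0 ∧ 0 ≤ x ∧ M *ᵥ x = lam • x := by
  have hK : IsCompact (Metric.sphere (0 : ι → ℝ) 1 ∩ Set.Ici 0) :=
    (isCompact_sphere 0 1).inter_right isClosed_Ici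
  obtain ⟨u, ⟨hu1, hu0⟩, hu⟩ := hK.exists_nonpos_of_forall_exists_le
    (f := fun u => ‖M *ᵥ u - lam • u‖) (by fun_prop) fun ε hε => by
      obtain ⟨R, hR, hRinv⟩ := hres (lam + ε) (by linarith)
      simpa using exists_approx_eigenvector_of_subinvariant (by linarith) hy hy0 hsub hR hRinv
  exact ⟨u, Metric.ne_of_mem_sphere hu1 one_ne_zero, hu0, sub_eq_zero.mp (norm_le_zero_iff.mp hu)⟩

section LinftyOpNorm

attribute [local instance] Matrix.linftyOpNormedAddCommGroup Matrix.linftyOpNormedRing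
  Matrix.linftyOpNormedAlgebra

lemma linfty_opNorm_map_ofReal (A : Matrix ι ι ℝ) : ‖A.map Complex.ofReal‖ = ‖A‖ := by
  simp [linfty_opNorm_def]

lemma summable_smul_pow_of_spectralRadius_lt (M : Matrix ι ι ℝ) {t : ℝ}
    (ht : spectralRadius ℂ (M.map Complex.ofReal) < ENNReal.ofReal t) :
    Summable fun k => (t⁻¹ • M) ^ k := by
  obtain ⟨s, hs0, hρs, hst⟩ := ENNReal.lt_iff_exists_real_btwn.mp ht
  obtain ⟨hst, ht0⟩ := ENNReal.ofReal_lt_ofReal_iff'.mp hst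
  refine .of_norm_bounded_eventually_nat
    (summable_geometric_of_lt_one (by positivity) ((div_lt_one ht0).mpr hst)) ?_
  filter_upwards [spectrum.eventually_norm_pow_le_of_spectralRadius_lt hρs] with k hk
  have hpow : M.map Complex.ofReal ^ k = (M ^ k).map Complex.ofReal :=
    (M.map_pow Complex.ofRealHom k).symm
  rw [hpow, linfty_opNorm_map_ofReal] at hk
  rw [_root_.smul_pow, norm_smul, norm_pow, norm_inv, Real.norm_of_nonneg ht0.le, div_pow,
    div_eq_inv_mul, inv_pow]
  gcongr

theorem exists_nonneg_eigenvector_of_spectrum_le {M : Matrix ι ι ℝ} (hM : ∀ i j, 0 ≤ M i j)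
    {lam : ℝ} (heig : ∃ v : ι → ℝ, v ≠ 0 ∧ M *ᵥ v = lam • v)
    (hper : ∀ μ ∈ spectrum ℂ (M.map Complex.ofReal), ‖μ‖ ≤ lam) :
    ∃ x, x ≠ 0 ∧ 0 ≤ x ∧ M *ᵥ x = lam • x := by
  obtain ⟨v, hv0, hv⟩ := heig
  have : Nonempty ι := not_isEmpty_iff.mp fun _ => hv0 (Subsingleton.elim _ _)
  obtain ⟨μ, hμ⟩ := spectrum.nonempty (M.map Complex.ofReal)
  have hlam : 0 ≤ lam := (norm_nonneg μ).trans (hper μ hμ)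
  have hρ : spectralRadius ℂ (M.map Complex.ofReal) ≤ ENNReal.ofReal lam :=
    iSup₂_le fun μ hμ => by
      rw [← ENNReal.ofReal_coe_nnreal, coe_nnnorm]; exact ENNReal.ofReal_le_ofReal (hper μ hμ)
  refine exists_nonneg_eigenvector_of_subinvariant (abs_nonneg v) (mt (Pi.abs_eq_zero v).mp hv0)
    ?_ fun t ht => ?_
  · calc lam • |v| = |M *ᵥ v| := by ext i; simp [hv, abs_mul, abs_of_nonneg hlam]
      _ ≤ M *ᵥ |v| := abs_mulVec_le hM v
  · have ht0 : 0 < t := hlam.trans_lt ht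
    exact exists_nonneg_mul_eq_one_of_summable hM ht0 <| summable_smul_pow_of_spectralRadius_lt M <|
      hρ.trans_lt ((ENNReal.ofReal_lt_ofReal_iff ht0).mpr ht)

end LinftyOpNorm

end Matrix

lemma Jmat_mulVec_apply {n : ℕ} (x : Fin n → ℝ) (i : Fin n) : (Jmat n *ᵥ x) i = x i.rev := by
  rw [mulVec, dotProduct, Finset.sum_eq_single i.rev]
  · have : (i : ℕ) + i.rev = n - 1 := by rw [Fin.val_rev]; omega
    simp only [Jmat, of_apply, this, if_true, one_mul]
  · intro j _ hj
    have : (i : ℕ) + j ≠ n - 1 := fun h => hj (Fin.ext (by rw [Fin.val_rev]; omega))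
    simp only [Jmat, of_apply, this, if_false, zero_mul]
  · simp

lemma Jmat_mulVec_Jmat_mulVec {n : ℕ} (x : Fin n → ℝ) : Jmat n *ᵥ (Jmat n *ᵥ x) = x := by
  ext i
  simp only [Jmat_mulVec_apply, Fin.rev_rev]

lemma mulVec_Jmat_mulVec_of_centrosymmetric {n : ℕ} {M : Matrix (Fin n) (Fin n) ℝ}
    (hc : Jmat n * M * Jmat n = M) (x : Fin n → ℝ) :
    M *ᵥ (Jmat n *ᵥ x) = Jmat n *ᵥ (M *ᵥ x) := by
  conv_lhs => rw [← hc]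
  rw [← mulVec_mulVec, Jmat_mulVec_Jmat_mulVec, mulVec_mulVec]

theorem symmetric_perron_eigenvector (n : ℕ) (M : Matrix (Fin n) (Fin n) ℝ)
    (hc : Jmat n * M * Jmat n = M) (hnn : ∀ i j, 0 ≤ M i j) (lam1 : ℝ)
    (heig : ∃ v : Fin n → ℝ, v ≠ 0 ∧ M.mulVec v = lam1 • v)
    (hper : ∀ μ ∈ spectrum ℂ (M.map Complex.ofReal), ‖μ‖ ≤ lam1) :
    ∃ x : Fin n → ℝ, x ≠ 0 ∧ (∀ i, 0 ≤ x i) ∧ M.mulVec x = lam1 • x ∧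
      (Jmat n).mulVec x = x := by
  obtain ⟨x, hx0, hx, hMx⟩ := exists_nonneg_eigenvector_of_spectrum_le hnn heig hper
  have hJx : 0 ≤ Jmat n *ᵥ x := fun i => by rw [Jmat_mulVec_apply]; exact hx i.rev
  refine ⟨x + Jmat n *ᵥ x, fun h => hx0 ?_, add_nonneg hx hJx, ?_, ?_⟩
  · exact le_antisymm (h ▸ le_add_of_nonneg_right hJx) hx
  · rw [mulVec_add, mulVec_Jmat_mulVec_of_centrosymmetric hc, hMx, mulVec_smul, smul_add]
  · rw [mulVec_add, Jmat_mulVec_Jmat_mulVec, add_comm]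
end

section
/- Every realizable list {λ₁, λ₂, λ₃, λ₄} of four real numbers (i.e., the spectrum of some 4×4 entrywise nonnegative matrix) is also the spectrum of a 4×4 centrosymmetric nonnegative matrix. -/
open Matrix Polynomial

/-!
Since `A` is nonnegative, so is `trace (A ^ k) = ∑ i, λᵢ ^ k` for every `k`; letting `k → ∞`
through odd values gives the Perron-type bound `-λ_min ≤ λ_max`. Conversely, for
`d ≤ c ≤ b ≤ a` with `0 ≤ a + d` and `0 ≤ a + b + c + d` one writes down a centrosymmetric
nonnegative matrix with spectrum `a, b, c, d` explicitly.
-/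

namespace Matrix

variable {n : Type*} [Fintype n] [DecidableEq n]

theorem trace_eq_sum_of_charpoly_eq_prod {R : Type*} [CommRing R] {A : Matrix n n R} {l : n → R}
    (hA : A.charpoly = ∏ i, (X - C (l i))) : A.trace = ∑ i, l i := by
  rw [trace_eq_neg_charpoly_nextCoeff, hA, prod_X_sub_C_nextCoeff, neg_neg]

theorem det_sub_scalar_eq_prod {R : Type*} [CommRing R] {A : Matrix n n R} {l : n → R}
    (hA : A.charpoly = ∏ i, (X - C (l i))) (μ : R) : (A - scalar n μ).det = ∏ i, (l i - μ) := by
  have h := congrArg (eval μ) hA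
  rw [eval_charpoly, eval_prod] at h
  simp only [eval_sub, eval_X, eval_C] at h
  rw [← neg_sub, det_neg, h, ← Finset.card_univ, ← Finset.prod_neg]
  simp

theorem det_aeval_eq_prod_eval {K : Type*} [Field K] [IsAlgClosed K] {A : Matrix n n K}
    {l : n → K} (hA : A.charpoly = ∏ i, (X - C (l i))) (q : K[X]) :
    (aeval A q).det = ∏ i, q.eval (l i) := by
  let φ : K[X] →* K := detMonoidHom.comp (aeval A).toMonoidHom
  let ψ : K[X] →* K := ∏ i, (evalRingHom (l i)).toMonoidHom
  suffices φ q = ψ q by simpa [φ, ψ, MonoidHom.finsetProd_apply] using this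
  rw [← C_leadingCoeff_mul_prod_multiset_X_sub_C (IsAlgClosed.card_roots_eq_natDegree (p := q))]
  simp only [map_mul, map_multiset_prod, Multiset.map_map]
  congr 1
  · simp [φ, ψ, algebraMap_eq_diagonal]
  · congr 1
    refine Multiset.map_congr rfl fun μ _ => ?_
    simpa [φ, ψ, MonoidHom.finsetProd_apply, algebraMap_eq_diagonal, Pi.algebraMap_def]
      using det_sub_scalar_eq_prod hA μ

theorem charpoly_pow_eq_prod {K : Type*} [Field K] [IsAlgClosed K] {A : Matrix n n K}
    {l : n → K} (hA : A.charpoly = ∏ i, (X - C (l i))) (k : ℕ) :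
    (A ^ k).charpoly = ∏ i, (X - C (l i ^ k)) :=
  Polynomial.funext fun s => by
    have h : aeval A (C s - X ^ k) = scalar n s - A ^ k := by
      simp [algebraMap_eq_diagonal]
    rw [eval_charpoly, ← h, det_aeval_eq_prod_eval hA, eval_prod]
    simp

theorem trace_pow_eq_sum_pow {K : Type*} [Field K] {A : Matrix n n K} {l : n → K}
    (hA : A.charpoly = ∏ i, (X - C (l i))) (k : ℕ) : (A ^ k).trace = ∑ i, l i ^ k := by
  let f := algebraMap K (AlgebraicClosure K)
  have hAf : (A.map f).charpoly = ∏ i, (X - C (f (l i))) := by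
    simp [charpoly_map, hA, Polynomial.map_prod]
  apply f.injective
  rw [AddMonoidHom.map_trace, Matrix.map_pow,
    trace_eq_sum_of_charpoly_eq_prod (charpoly_pow_eq_prod hAf k)]
  simp

end Matrix

open Filter Topology in
theorem exists_neg_le_of_sum_pow_nonneg {ι : Type*} [Fintype ι] {l : ι → ℝ}
    (h : ∀ k, Odd k → 0 ≤ ∑ i, l i ^ k) (j : ι) : ∃ i, -l j ≤ l i := by
  classical
  -- Otherwise every `l i < m := -l j`, and `-m ^ k` dominates the odd power sums.
  by_contra! hlt
  have : Nonempty ι := ⟨j⟩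
  obtain ⟨i₀, hi₀⟩ := Finite.exists_max l
  set m := -l j
  set c := max (l i₀) 0
  have hm : 0 < m := by linarith [hlt j]
  have hc : 0 ≤ c := le_max_right _ _
  have hcm : c < m := max_lt (hlt i₀) hm
  have hpow_le : ∀ k, Odd k → ∀ i, l i ^ k ≤ c ^ k := fun k hk i => by
    rcases le_or_gt (l i) 0 with hi | hi
    · exact (hk.pow_nonpos hi).trans (pow_nonneg hc k)
    · exact pow_le_pow_left₀ hi.le ((hi₀ i).trans (le_max_left _ _)) k
  have hsum_le : ∀ k, Odd k → ∑ i, l i ^ k ≤ Fintype.card ι * c ^ k - m ^ k := fun k hk =>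
    calc ∑ i, l i ^ k = l j ^ k + ∑ i ∈ Finset.univ.erase j, l i ^ k :=
          (Finset.add_sum_erase _ _ (Finset.mem_univ j)).symm
      _ ≤ -m ^ k + ∑ i, c ^ k := by
          rw [show l j = -m by simp [m], hk.neg_pow]
          gcongr
          exact (Finset.sum_le_sum fun i _ => hpow_le k hk i).trans
            (Finset.sum_le_sum_of_subset_of_nonneg (Finset.erase_subset _ _)
              fun _ _ _ => pow_nonneg hc k)
      _ = Fintype.card ι * c ^ k - m ^ k := by
          rw [Finset.sum_const, Finset.card_univ, nsmul_eq_mul]; ring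
  have hlim : Tendsto (fun k => Fintype.card ι * (c / m) ^ k) atTop (𝓝 0) := by
    simpa using (tendsto_pow_atTop_nhds_zero_of_lt_one (div_nonneg hc hm.le)
      ((div_lt_one hm).2 hcm)).const_mul (Fintype.card ι : ℝ)
  obtain ⟨N, hN⟩ := eventually_atTop.1 (hlim.eventually (gt_mem_nhds one_pos))
  have hk := hN (2 * N + 1) (by omega)
  have hodd : Odd (2 * N + 1) := odd_two_mul_add_one N
  rw [div_pow, mul_div_assoc', div_lt_one (pow_pos hm _)] at hk
  linarith [h _ hodd, hsum_le _ hodd]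

theorem Jmat_apply {n : ℕ} (i j : Fin n) : Jmat n i j = if i.rev = j then 1 else 0 := by
  simp only [Jmat, of_apply, Fin.ext_iff, Fin.val_rev]
  congr 1
  apply propext
  omega

theorem Jmat_mul_mul_Jmat_apply {n : ℕ} (M : Matrix (Fin n) (Fin n) ℝ) (i j : Fin n) :
    (Jmat n * M * Jmat n) i j = M i.rev j.rev := by
  simp only [mul_apply, Jmat_apply, ite_mul, mul_ite, one_mul, mul_one, zero_mul, mul_zero,
    Finset.sum_ite_eq, Finset.mem_univ, if_true]
  simp only [Fin.rev_eq_iff, Finset.sum_ite_eq', Finset.mem_univ, if_true]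

/-- It maps `e₀ + e₃ ↦ x₁ (e₀ + e₃) + (e₁ + e₂)` and `e₁ + e₂ ↦ u (e₀ + e₃) + x₂ (e₁ + e₂)`, and has
`e₀ - e₃`, `e₁ - e₂` as eigenvectors for `c`, `d`. -/
noncomputable def centroMatrix (x₁ x₂ u c d : ℝ) : Matrix (Fin 4) (Fin 4) ℝ :=
  !![(x₁ + c) / 2, u / 2, u / 2, (x₁ - c) / 2;
     1 / 2, (x₂ + d) / 2, (x₂ - d) / 2, 1 / 2;
     1 / 2, (x₂ - d) / 2, (x₂ + d) / 2, 1 / 2;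
     (x₁ - c) / 2, u / 2, u / 2, (x₁ + c) / 2]

theorem Jmat_mul_centroMatrix_mul_Jmat (x₁ x₂ u c d : ℝ) :
    Jmat 4 * centroMatrix x₁ x₂ u c d * Jmat 4 = centroMatrix x₁ x₂ u c d := by
  ext i j
  rw [Jmat_mul_mul_Jmat_apply]
  fin_cases i <;> fin_cases j <;> rfl

theorem charpoly_centroMatrix (x₁ x₂ u c d : ℝ) :
    (centroMatrix x₁ x₂ u c d).charpoly =
      (X ^ 2 - C (x₁ + x₂) * X + C (x₁ * x₂ - u)) * (X - C c) * (X - C d) :=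
  Polynomial.funext fun r => by
    rw [eval_charpoly, det_succ_row_zero]
    simp [Fin.sum_univ_succ, det_fin_three, centroMatrix, Fin.succAbove]
    ring

theorem centroMatrix_nonneg {x₁ x₂ u c d : ℝ} (hc : |c| ≤ x₁) (hd : |d| ≤ x₂) (hu : 0 ≤ u) :
    ∀ i j, 0 ≤ centroMatrix x₁ x₂ u c d i j := by
  obtain ⟨hc₁, hc₂⟩ := abs_le.1 hc
  obtain ⟨hd₁, hd₂⟩ := abs_le.1 hd
  intro i j
  fin_cases i <;> fin_cases j <;> simp [centroMatrix] <;> linarith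

theorem exists_centrosymm_nonneg_charpoly_eq_prod {m : Fin 4 → ℝ} (hm : Monotone m)
    (h03 : 0 ≤ m 0 + m 3) (hsum : 0 ≤ ∑ i, m i) :
    ∃ M : Matrix (Fin 4) (Fin 4) ℝ, Jmat 4 * M * Jmat 4 = M ∧ (∀ i j, 0 ≤ M i j) ∧
      M.charpoly = ∏ i, (X - C (m i)) := by
  have h01 := hm (show (0 : Fin 4) ≤ 1 by decide)
  have h12 := hm (show (1 : Fin 4) ≤ 2 by decide)
  have h23 := hm (show (2 : Fin 4) ≤ 3 by decide)
  rw [Fin.sum_univ_four] at hsum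
  -- With `x₁ = max |c| b`, the entries `x₁ ± c`, `x₂ ± d` and `u = (a - x₁) (x₁ - b)` are
  -- nonnegative, while `!![x₁, u; 1, x₂]` keeps trace `a + b` and determinant `a b`.
  set x₁ := max |m 1| (m 2)
  have hx₁ : x₁ ≤ m 3 := max_le (abs_le.2 ⟨by linarith, by linarith⟩) h23
  have hx₂ : |m 0| ≤ m 3 + m 2 - x₁ := by
    rw [le_sub_comm]
    refine max_le ?_ ?_ <;> cases abs_cases (m 0) <;> cases abs_cases (m 1) <;> linarith
  refine ⟨centroMatrix x₁ (m 3 + m 2 - x₁) ((m 3 - x₁) * (x₁ - m 2)) (m 1) (m 0),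
    Jmat_mul_centroMatrix_mul_Jmat .., centroMatrix_nonneg (le_max_left _ _) hx₂
      (mul_nonneg (by linarith) (by linarith [le_max_right |m 1| (m 2)])), ?_⟩
  rw [charpoly_centroMatrix, Fin.prod_univ_four,
    show x₁ + (m 3 + m 2 - x₁) = m 3 + m 2 by ring,
    show x₁ * (m 3 + m 2 - x₁) - (m 3 - x₁) * (x₁ - m 2) = m 3 * m 2 by ring, C_add, C_mul]
  ring

theorem realizable_four_reals_centrosymmetric_realizable (l : Fin 4 → ℝ)
    (hreal : ∃ A : Matrix (Fin 4) (Fin 4) ℝ, (∀ i j, 0 ≤ A i j) ∧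
      A.charpoly = ∏ i, (X - C (l i))) :
    ∃ M : Matrix (Fin 4) (Fin 4) ℝ, Jmat 4 * M * Jmat 4 = M ∧ (∀ i j, 0 ≤ M i j) ∧
      M.charpoly = ∏ i, (X - C (l i)) := by
  obtain ⟨A, hA, hchar⟩ := hreal
  set σ := Tuple.sort l
  have hpow : ∀ k, 0 ≤ ∑ i, l (σ i) ^ k := fun k => by
    rw [Equiv.sum_comp σ (fun i => l i ^ k), ← trace_pow_eq_sum_pow hchar]
    exact Finset.sum_nonneg fun i _ => pow_apply_nonneg hA k i i
  obtain ⟨i, hi⟩ := exists_neg_le_of_sum_pow_nonneg (fun k _ => hpow k) 0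
  have hmono : Monotone (l ∘ σ) := Tuple.monotone_sort l
  have h03 : 0 ≤ l (σ 0) + l (σ 3) :=
    neg_le_iff_add_nonneg'.1 (hi.trans (hmono (Fin.le_last i)))
  obtain ⟨M, hcs, hM, hcp⟩ :=
    exists_centrosymm_nonneg_charpoly_eq_prod hmono h03 (by simpa using hpow 1)
  exact ⟨M, hcs, hM, hcp.trans (Equiv.prod_comp σ fun i => X - C (l i))⟩
end

section
/- Let λ₁ ≥ λ₂ ≥ λ₃ ≥ λ₄ be real numbers with λ₁+λ₂+λ₃+λ₄ ≥ 0 and λ₁ ≥ |λⱼ| for j = 2,3,4, and let ω₁, ω₂ be nonnegative with: (i) 0 ≤ ωₖ ≤ λ₁ for k=1,2; (ii) ω₁+ω₂ = (λ₁+λ₂+λ₃+λ₄)/2; (iii) ωₖ ≥ λ_{k+2} for k=1,2; (iv) (2ω₁−λ₃)(2ω₂−λ₄) ≥ λ₁λ₂. Then there exists a 4×4 centrosymmetric nonnegative matrix with spectrum {λ₁,λ₂,λ₃,λ₄} and diagonal entries ω₁, ω₂, ω₂, ω₁. -/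
open Matrix Polynomial

set_option maxHeartbeats 1600000 in
set_option maxHeartbeats 1600000 in
private lemma det_fin_four' {R : Type*} [CommRing R] (M : Matrix (Fin 4) (Fin 4) R) :
    M.det =
      M 0 0 * M 1 1 * M 2 2 * M 3 3 - M 0 0 * M 1 1 * M 2 3 * M 3 2 -
        M 0 0 * M 1 2 * M 2 1 * M 3 3 + M 0 0 * M 1 2 * M 2 3 * M 3 1 +
        M 0 0 * M 1 3 * M 2 1 * M 3 2 - M 0 0 * M 1 3 * M 2 2 * M 3 1 -
        M 0 1 * M 1 0 * M 2 2 * M 3 3 + M 0 1 * M 1 0 * M 2 3 * M 3 2 +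
        M 0 1 * M 1 2 * M 2 0 * M 3 3 - M 0 1 * M 1 2 * M 2 3 * M 3 0 -
        M 0 1 * M 1 3 * M 2 0 * M 3 2 + M 0 1 * M 1 3 * M 2 2 * M 3 0 +
        M 0 2 * M 1 0 * M 2 1 * M 3 3 - M 0 2 * M 1 0 * M 2 3 * M 3 1 -
        M 0 2 * M 1 1 * M 2 0 * M 3 3 + M 0 2 * M 1 1 * M 2 3 * M 3 0 +
        M 0 2 * M 1 3 * M 2 0 * M 3 1 - M 0 2 * M 1 3 * M 2 1 * M 3 0 -
        M 0 3 * M 1 0 * M 2 1 * M 3 2 + M 0 3 * M 1 0 * M 2 2 * M 3 1 +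
        M 0 3 * M 1 1 * M 2 0 * M 3 2 - M 0 3 * M 1 1 * M 2 2 * M 3 0 -
        M 0 3 * M 1 2 * M 2 0 * M 3 1 + M 0 3 * M 1 2 * M 2 1 * M 3 0 := by
  rw [Matrix.det_succ_row_zero, Fin.sum_univ_four]
  simp [Matrix.det_fin_three, Matrix.submatrix_apply,
    show Fin.succ (0:Fin 3) = 1 from rfl, show Fin.succ (1:Fin 3) = 2 from rfl,
    show Fin.succ (2:Fin 3) = 3 from rfl,
    show Fin.succAbove (0:Fin 4) 0 = 1 from rfl, show Fin.succAbove (0:Fin 4) 1 = 2 from rfl,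
    show Fin.succAbove (0:Fin 4) 2 = 3 from rfl,
    show Fin.succAbove (1:Fin 4) 0 = 0 from rfl, show Fin.succAbove (1:Fin 4) 1 = 2 from rfl,
    show Fin.succAbove (1:Fin 4) 2 = 3 from rfl,
    show Fin.succAbove (2:Fin 4) 0 = 0 from rfl, show Fin.succAbove (2:Fin 4) 1 = 1 from rfl,
    show Fin.succAbove (2:Fin 4) 2 = 3 from rfl,
    show Fin.succAbove (3:Fin 4) 0 = 0 from rfl, show Fin.succAbove (3:Fin 4) 1 = 1 from rfl,
    show Fin.succAbove (3:Fin 4) 2 = 2 from rfl,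
    show (((0:Fin 4)):ℕ) = 0 from rfl, show (((1:Fin 4)):ℕ) = 1 from rfl,
    show (((2:Fin 4)):ℕ) = 2 from rfl, show (((3:Fin 4)):ℕ) = 3 from rfl]
  ring


theorem four_reals_prescribed_diagonal_centrosymmetric (l1 l2 l3 l4 : ℝ)
    (h12 : l2 ≤ l1) (h23 : l3 ≤ l2) (h34 : l4 ≤ l3)
    (hsum : 0 ≤ l1 + l2 + l3 + l4)
    (hd2 : |l2| ≤ l1) (hd3 : |l3| ≤ l1) (hd4 : |l4| ≤ l1)
    (ω1 ω2 : ℝ)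
    (hω1 : 0 ≤ ω1) (hω1' : ω1 ≤ l1) (hω2 : 0 ≤ ω2) (hω2' : ω2 ≤ l1)
    (htr : ω1 + ω2 = (l1 + l2 + l3 + l4) / 2)
    (hω13 : l3 ≤ ω1) (hω24 : l4 ≤ ω2)
    (hprod : l1 * l2 ≤ (2 * ω1 - l3) * (2 * ω2 - l4)) :
    ∃ M : Matrix (Fin 4) (Fin 4) ℝ, Jmat 4 * M * Jmat 4 = M ∧ (∀ i j, 0 ≤ M i j) ∧
      M.charpoly = (X - C l1) * (X - C l2) * (X - C l3) * (X - C l4) ∧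
      M 0 0 = ω1 ∧ M 1 1 = ω2 ∧ M 2 2 = ω2 ∧ M 3 3 = ω1 := by
  have hJ : Jmat 4 = !![0,0,0,1;0,0,1,0;0,1,0,0;1,0,0,0] := by
    ext i j
    fin_cases i <;> fin_cases j <;>
      simp [Jmat, show ((3:Fin 4):ℕ) = 3 from rfl, Matrix.vecHead, Matrix.vecTail]
  set q : ℝ := (2 * ω1 - l3) * (2 * ω2 - l4) - l1 * l2 with hq
  have hq0 : 0 ≤ q := by simp [hq]; linarith
  refine ⟨!![ω1, 1/2, 1/2, ω1 - l3;
             q/2, ω2, ω2 - l4, q/2;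
             q/2, ω2 - l4, ω2, q/2;
             ω1 - l3, 1/2, 1/2, ω1], ?_, ?_, ?_, by simp, by simp, by simp, by simp⟩
  · rw [hJ]
    ext i j
    fin_cases i <;> fin_cases j <;>
      simp [Matrix.mul_apply, Fin.sum_univ_four, Matrix.vecHead, Matrix.vecTail]
  · intro i j
    fin_cases i <;> fin_cases j <;> simp [Matrix.vecHead, Matrix.vecTail] <;> linarith
  · have hω2eq : ω2 = (l1 + l2 + l3 + l4) / 2 - ω1 := by linarith
    rw [Matrix.charpoly, det_fin_four']
    apply Polynomial.funext
    intro x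
    simp [charmatrix_apply, Matrix.one_apply, hq, hω2eq]
    ring
end

section
/- Let Λ = {λ₁, λ₂, a+ib, a−ib} with λ₁, λ₂, a ∈ ℝ, b > 0, λ₁+λ₂−2|a| ≥ 0 and λ₁−λ₂−2b ≥ 0, and let ω₁, ω₂ be nonnegative reals satisfying: (i) 0 ≤ ωₖ ≤ λ₁; (ii) ω₁+ω₂ = (λ₁+λ₂+2a)/2; (iii) (2ω₁−a)(2ω₂−a) ≥ λ₁λ₂ + b²; (iv) ωₖ ≥ a for k=1,2. Then there exists a 4×4 centrosymmetric nonnegative matrix with spectrum Λ and diagonal entries ω₁, ω₂, ω₂, ω₁. -/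
/-!
A centrosymmetric matrix `C = [[A, JBJ], [B, JAJ]]` satisfies `C P = P · diag(A + JB, A - JB)`
with `P = [[I, I], [J, -J]]`, and `P` is invertible when `2` is, so the spectrum of `C` is that of
`A + JB` together with that of `A - JB`. Taking `A + JB = [[2ω₁ - a, 1], [p, 2ω₂ - a]]` with
`p = (2ω₁ - a)(2ω₂ - a) - λ₁λ₂` (trace `λ₁ + λ₂`, determinant `λ₁λ₂`) and
`A - JB = [[a, 1], [-b², a]]` (eigenvalues `a ± ib`) determines `A` and `B`; the diagonal of `A`
is `(ω₁, ω₂)`, and the remaining entries are nonnegative because `p ≥ b²` and `ωₖ ≥ a`.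
-/

open Matrix Polynomial

namespace Matrix

variable {n R : Type*} [Fintype n]

def centrosymmetricOfBlocks [Semiring R] (J A B : Matrix n n R) : Matrix (n ⊕ n) (n ⊕ n) R :=
  fromBlocks A (J * B * J) B (J * A * J)

section Nonneg

variable [Semiring R] [PartialOrder R] [IsOrderedRing R]

theorem mul_apply_nonneg {A B : Matrix n n R} (hA : ∀ i j, 0 ≤ A i j) (hB : ∀ i j, 0 ≤ B i j)
    (i j : n) : 0 ≤ (A * B) i j :=
  Finset.sum_nonneg fun k _ => mul_nonneg (hA i k) (hB k j)

theorem centrosymmetricOfBlocks_nonneg {J A B : Matrix n n R} (hJ : ∀ i j, 0 ≤ J i j)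
    (hA : ∀ i j, 0 ≤ A i j) (hB : ∀ i j, 0 ≤ B i j) :
    ∀ i j, 0 ≤ centrosymmetricOfBlocks J A B i j := by
  have hJBJ := mul_apply_nonneg (mul_apply_nonneg hJ hB) hJ
  have hJAJ := mul_apply_nonneg (mul_apply_nonneg hJ hA) hJ
  rintro (i | i) (j | j)
  exacts [hA i j, hJBJ i j, hB i j, hJAJ i j]

end Nonneg

variable [DecidableEq n] [CommRing R] {J : Matrix n n R}

theorem fromBlocks_exchange_mul_centrosymmetricOfBlocks_mul (hJ : J * J = 1)
    (A B : Matrix n n R) :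
    fromBlocks 0 J J 0 * centrosymmetricOfBlocks J A B * fromBlocks 0 J J 0 =
      centrosymmetricOfBlocks J A B := by
  simp only [centrosymmetricOfBlocks, fromBlocks_multiply, zero_mul, zero_add, add_zero, mul_zero,
    ← mul_assoc, hJ, one_mul]
  simp only [mul_assoc, hJ, mul_one]

theorem two_smul_centrosymmetricOfBlocks (hJ : J * J = 1) (A B : Matrix n n R) :
    (2 : R) • centrosymmetricOfBlocks J A B =
      fromBlocks 1 1 J (-J) * fromBlocks (A + J * B) 0 0 (A - J * B) *
        fromBlocks 1 J 1 (-J) := by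
  simp only [centrosymmetricOfBlocks, fromBlocks_multiply, fromBlocks_smul]
  congr 1 <;> simp only [mul_add, mul_sub, add_mul, sub_mul, ← mul_assoc, hJ, one_mul, mul_one,
    mul_neg, neg_mul, mul_zero, add_zero, zero_add, two_smul] <;> abel

theorem charpoly_centrosymmetricOfBlocks [Invertible (2 : R)] (hJ : J * J = 1)
    (A B : Matrix n n R) :
    (centrosymmetricOfBlocks J A B).charpoly = (A + J * B).charpoly * (A - J * B).charpoly := by
  have hQP : fromBlocks 1 J 1 (-J) * fromBlocks 1 1 J (-J) =
      (2 : R) • (1 : Matrix (n ⊕ n) (n ⊕ n) R) := by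
    rw [fromBlocks_multiply, ← fromBlocks_one, fromBlocks_smul]
    simp [hJ, two_smul]
  have hC : centrosymmetricOfBlocks J A B =
      fromBlocks 1 1 J (-J) * (fromBlocks (A + J * B) 0 0 (A - J * B) *
        ((⅟2 : R) • fromBlocks 1 J 1 (-J))) := by
    rw [← mul_assoc, mul_smul_comm, ← two_smul_centrosymmetricOfBlocks hJ, smul_smul,
      invOf_mul_self, one_smul]
  rw [hC, charpoly_mul_comm, mul_assoc, smul_mul_assoc, hQP, smul_smul, invOf_mul_self, one_smul,
    mul_one, charpoly_fromBlocks_zero₁₂]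

theorem charpoly_fin_two_of_trace_of_det [Nontrivial R] {M : Matrix (Fin 2) (Fin 2) R} {s t : R}
    (htr : M.trace = s + t) (hdet : M.det = s * t) : M.charpoly = (X - C s) * (X - C t) := by
  rw [charpoly_fin_two, htr, hdet, C_add, C_mul]
  ring

end Matrix

theorem Jmat_nonneg (n : ℕ) (i j : Fin n) : 0 ≤ Jmat n i j := by
  simp only [Jmat, of_apply]
  split_ifs <;> norm_num

theorem Jmat_mul_self (n : ℕ) : Jmat n * Jmat n = 1 := by
  have hJ : Jmat n = (Fin.revPerm : Equiv.Perm (Fin n)).permMatrix ℝ := by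
    ext i j
    simp only [Jmat, of_apply, PEquiv.toMatrix_apply, Equiv.toPEquiv_apply, Option.mem_def,
      Option.some.injEq, Fin.revPerm_apply, Fin.ext_iff, Fin.val_rev]
    congr 1
    apply propext
    omega
  rw [hJ, ← permMatrix_mul, show (Fin.revPerm * Fin.revPerm : Equiv.Perm (Fin n)) = 1 from
    Equiv.ext Fin.rev_rev, permMatrix_one]

theorem Jmat_add_eq_reindex_fromBlocks (n : ℕ) :
    Jmat (n + n) = reindex finSumFinEquiv finSumFinEquiv (fromBlocks 0 (Jmat n) (Jmat n) 0) := by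
  ext i j
  obtain ⟨i, rfl⟩ := finSumFinEquiv.surjective i
  obtain ⟨j, rfl⟩ := finSumFinEquiv.surjective j
  simp only [reindex_apply, submatrix_apply, Equiv.symm_apply_apply]
  rcases i with i | i <;> rcases j with j | j <;> simp [Jmat] <;>
    (have := i.isLt; have := j.isLt; (try split_ifs) <;> first | rfl | omega)

theorem Jmat_mul_reindex_centrosymmetricOfBlocks_mul_Jmat (n : ℕ)
    (A B : Matrix (Fin n) (Fin n) ℝ) :
    Jmat (n + n) * reindex finSumFinEquiv finSumFinEquiv (centrosymmetricOfBlocks (Jmat n) A B) *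
        Jmat (n + n) =
      reindex finSumFinEquiv finSumFinEquiv (centrosymmetricOfBlocks (Jmat n) A B) := by
  simp only [Jmat_add_eq_reindex_fromBlocks, reindex_apply, submatrix_mul_equiv,
    fromBlocks_exchange_mul_centrosymmetricOfBlocks_mul (Jmat_mul_self n)]

theorem reindex_centrosymmetricOfBlocks_diag (A B : Matrix (Fin 2) (Fin 2) ℝ) :
    let M := reindex finSumFinEquiv finSumFinEquiv (centrosymmetricOfBlocks (Jmat 2) A B)
    M 0 0 = A 0 0 ∧ M 1 1 = A 1 1 ∧ M 2 2 = A 1 1 ∧ M 3 3 = A 0 0 := by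
  have h2 : finSumFinEquiv.symm (2 : Fin (2 + 2)) = Sum.inr 0 := rfl
  have h3 : finSumFinEquiv.symm (3 : Fin (2 + 2)) = Sum.inr 1 := rfl
  refine ⟨rfl, rfl, ?_, ?_⟩ <;>
    simp [h2, h3, centrosymmetricOfBlocks, Jmat, mul_apply, Fin.sum_univ_two]

theorem charpoly_map_ofRealHom_of_complex_pair (a b : ℝ) :
    (!![a, 1; -b ^ 2, a].map Complex.ofRealHom).charpoly =
      (X - C (a + b * Complex.I)) * (X - C (a - b * Complex.I)) :=
  charpoly_fin_two_of_trace_of_det (by simp [trace_fin_two])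
    (by simp [det_fin_two]; linear_combination (b : ℂ) ^ 2 * Complex.I_sq)

section Blocks

variable (a b ω1 ω2 p : ℝ)

/-- `A = (S + T) / 2` for `S = [[2ω₁ - a, 1], [p, 2ω₂ - a]]` and `T = [[a, 1], [-b², a]]`. -/
noncomputable def blockA : Matrix (Fin 2) (Fin 2) ℝ := !![ω1, 1; (p - b ^ 2) / 2, ω2]

/-- `B = J (S - T) / 2`, so that `A + JB = S` and `A - JB = T`. -/
noncomputable def blockB : Matrix (Fin 2) (Fin 2) ℝ := !![(p + b ^ 2) / 2, ω2 - a; ω1 - a, 0]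

theorem blockA_add_Jmat_mul_blockB :
    blockA b ω1 ω2 p + Jmat 2 * blockB a b ω1 ω2 p = !![2 * ω1 - a, 1; p, 2 * ω2 - a] := by
  ext i j
  fin_cases i <;> fin_cases j <;> simp [blockA, blockB, Jmat, mul_apply, Fin.sum_univ_two] <;> ring

theorem blockA_sub_Jmat_mul_blockB :
    blockA b ω1 ω2 p - Jmat 2 * blockB a b ω1 ω2 p = !![a, 1; -b ^ 2, a] := by
  ext i j
  fin_cases i <;> fin_cases j <;> simp [blockA, blockB, Jmat, mul_apply, Fin.sum_univ_two]
  ring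

end Blocks

theorem blockA_nonneg {b ω1 ω2 p : ℝ} (hω1 : 0 ≤ ω1) (hω2 : 0 ≤ ω2) (hp : b ^ 2 ≤ p) :
    ∀ i j, 0 ≤ blockA b ω1 ω2 p i j := by
  intro i j
  fin_cases i <;> fin_cases j <;> simp [blockA] <;> linarith

theorem blockB_nonneg {a b ω1 ω2 p : ℝ} (hω1 : a ≤ ω1) (hω2 : a ≤ ω2) (hp : b ^ 2 ≤ p) :
    ∀ i j, 0 ≤ blockB a b ω1 ω2 p i j := by
  intro i j
  fin_cases i <;> fin_cases j <;> simp [blockB] <;> nlinarith [sq_nonneg b]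

theorem complex_pair_prescribed_diagonal_centrosymmetric_general (l1 l2 a b : ℝ)
    (ω1 ω2 : ℝ)
    (hω1 : 0 ≤ ω1) (hω2 : 0 ≤ ω2)
    (htr : ω1 + ω2 = (l1 + l2 + 2 * a) / 2)
    (hprod : l1 * l2 + b ^ 2 ≤ (2 * ω1 - a) * (2 * ω2 - a))
    (hωa1 : a ≤ ω1) (hωa2 : a ≤ ω2) :
    ∃ M : Matrix (Fin 4) (Fin 4) ℝ, Jmat 4 * M * Jmat 4 = M ∧ (∀ i j, 0 ≤ M i j) ∧
      (M.map Complex.ofReal).charpoly =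
        (X - C (l1 : ℂ)) * (X - C (l2 : ℂ)) *
          (X - C (Complex.ofReal a + Complex.ofReal b * Complex.I)) *
          (X - C (Complex.ofReal a - Complex.ofReal b * Complex.I)) ∧
      M 0 0 = ω1 ∧ M 1 1 = ω2 ∧ M 2 2 = ω2 ∧ M 3 3 = ω1 := by
  obtain ⟨p, hp⟩ : ∃ p, p = (2 * ω1 - a) * (2 * ω2 - a) - l1 * l2 := ⟨_, rfl⟩
  have hpb : b ^ 2 ≤ p := by linarith
  refine ⟨reindex finSumFinEquiv finSumFinEquiv
      (centrosymmetricOfBlocks (Jmat 2) (blockA b ω1 ω2 p) (blockB a b ω1 ω2 p)),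
    Jmat_mul_reindex_centrosymmetricOfBlocks_mul_Jmat 2 _ _,
    fun i j => centrosymmetricOfBlocks_nonneg (Jmat_nonneg 2) (blockA_nonneg hω1 hω2 hpb)
      (blockB_nonneg hωa1 hωa2 hpb) _ _,
    ?_, reindex_centrosymmetricOfBlocks_diag _ _⟩
  have hS : (!![2 * ω1 - a, 1; p, 2 * ω2 - a]).charpoly = (X - C l1) * (X - C l2) :=
    charpoly_fin_two_of_trace_of_det (by simp [trace_fin_two]; linarith)
      (by simp [det_fin_two, hp])
  refine (charpoly_map _ Complex.ofRealHom).trans ?_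
  rw [charpoly_reindex, charpoly_centrosymmetricOfBlocks (Jmat_mul_self 2),
    blockA_add_Jmat_mul_blockB, blockA_sub_Jmat_mul_blockB, Polynomial.map_mul,
    ← charpoly_map !![a, 1; -b ^ 2, a], hS, charpoly_map_ofRealHom_of_complex_pair]
  simp [Polynomial.map_mul, mul_assoc]

theorem complex_pair_prescribed_diagonal_centrosymmetric (l1 l2 a b : ℝ) (hb : 0 < b)
    (h1 : 0 ≤ l1 + l2 - 2 * |a|) (h2 : 0 ≤ l1 - l2 - 2 * b)
    (ω1 ω2 : ℝ)
    (hω1 : 0 ≤ ω1) (hω1' : ω1 ≤ l1) (hω2 : 0 ≤ ω2) (hω2' : ω2 ≤ l1)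
    (htr : ω1 + ω2 = (l1 + l2 + 2 * a) / 2)
    (hprod : l1 * l2 + b ^ 2 ≤ (2 * ω1 - a) * (2 * ω2 - a))
    (hωa1 : a ≤ ω1) (hωa2 : a ≤ ω2) :
    ∃ M : Matrix (Fin 4) (Fin 4) ℝ, Jmat 4 * M * Jmat 4 = M ∧ (∀ i j, 0 ≤ M i j) ∧
      (M.map Complex.ofReal).charpoly =
        (X - C (l1 : ℂ)) * (X - C (l2 : ℂ)) *
          (X - C (Complex.ofReal a + Complex.ofReal b * Complex.I)) *
          (X - C (Complex.ofReal a - Complex.ofReal b * Complex.I)) ∧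
      M 0 0 = ω1 ∧ M 1 1 = ω2 ∧ M 2 2 = ω2 ∧ M 3 3 = ω1 :=
  complex_pair_prescribed_diagonal_centrosymmetric_general l1 l2 a b ω1 ω2 hω1 hω2 htr hprod hωa1
    hωa2
end
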